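/- If X has the GLL density with parameters θ > 0, λ ≥ 0, p ≥ 0, then for any positive integer r, E[(log X)^r] = (−1)^r · (p+1)(p+2)⋯(p+r) · (1+r+p+λθ) / (θ^r·(1+p+λθ)). -/

import Mathlib

open Real MeasureTheory

/-- The generalized Log-Lindley (GLL) density. -/
noncomputable def gll (θ lam p x : ℝ) : ℝ :=
  θ ^ (2 + p) / (Real.Gamma (1 + p) * (1 + p + lam * θ)) *
    (-Real.log x) ^ p * (lam - Real.log x) * x ^ (θ - 1)

/-!
Under `x = exp (-t)` the integral `∫₀¹ (-log x) ^ b * x ^ (θ - 1) dx` becomes the Gamma integral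
`∫₀^∞ t ^ b * exp (-θ t) dt = Γ(b + 1) / θ ^ (b + 1)`. Multiplied by `(log x) ^ r`, the GLL density
is a combination of two such integrands, with `b = p + r` and `b = p + r + 1`; the closed form
follows from `Γ(p + 1 + r) = (p + 1)_[r] Γ(p + 1)`.
-/

open Set

lemma image_exp_neg_Ioi : (fun t : ℝ => exp (-t)) '' Ioi 0 = Ioo 0 1 := by
  ext x
  constructor
  · rintro ⟨t, ht, rfl⟩
    exact ⟨exp_pos _, exp_lt_one_iff.mpr (neg_lt_zero.mpr ht)⟩
  · rintro ⟨hx0, hx1⟩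
    exact ⟨-log x, neg_pos.mpr (log_neg hx0 hx1), by simp [exp_log hx0]⟩

lemma injOn_exp_neg (s : Set ℝ) : InjOn (fun t : ℝ => exp (-t)) s :=
  (exp_injective.comp neg_injective).injOn

lemma hasDerivWithinAt_exp_neg (s : Set ℝ) (t : ℝ) :
    HasDerivWithinAt (fun t : ℝ => exp (-t)) (-exp (-t)) s t := by
  simpa using (hasDerivAt_neg t).exp.hasDerivWithinAt

lemma abs_deriv_smul_neg_log_rpow_mul_rpow (b θ t : ℝ) :
    |-exp (-t)| • ((-log (exp (-t))) ^ b * exp (-t) ^ (θ - 1)) = t ^ b * exp (-(θ * t)) := by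
  rw [abs_neg, abs_of_pos (exp_pos _), smul_eq_mul, log_exp, neg_neg, ← exp_mul,
    mul_left_comm, ← exp_add]
  ring_nf

lemma integrableOn_neg_log_rpow_mul_rpow {b θ : ℝ} (hb : -1 < b) (hθ : 0 < θ) :
    IntegrableOn (fun x => (-log x) ^ b * x ^ (θ - 1)) (Ioo 0 1) := by
  rw [← image_exp_neg_Ioi, integrableOn_image_iff_integrableOn_abs_deriv_smul measurableSet_Ioi
    (fun t _ => hasDerivWithinAt_exp_neg _ t) (injOn_exp_neg _)]
  simp only [abs_deriv_smul_neg_log_rpow_mul_rpow]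
  simpa using integrableOn_rpow_mul_exp_neg_mul_rpow hb zero_lt_one hθ

lemma integral_neg_log_rpow_mul_rpow {b θ : ℝ} (hb : -1 < b) (hθ : 0 < θ) :
    ∫ x in Ioo 0 1, (-log x) ^ b * x ^ (θ - 1) = Gamma (b + 1) / θ ^ (b + 1) := by
  rw [← image_exp_neg_Ioi, integral_image_eq_integral_abs_deriv_smul measurableSet_Ioi
    (fun t _ => hasDerivWithinAt_exp_neg _ t) (injOn_exp_neg _)]
  simp only [abs_deriv_smul_neg_log_rpow_mul_rpow]
  have := integral_rpow_mul_exp_neg_mul_Ioi (a := b + 1) (by linarith) hθ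
  rw [add_sub_cancel_right] at this
  rw [this, one_div, inv_rpow hθ.le, inv_mul_eq_div]

lemma Gamma_add_nat_eq_prod_mul_Gamma {a : ℝ} (ha : ∀ k : ℕ, a + k ≠ 0) (r : ℕ) :
    Gamma (a + r) = (∏ i ∈ Finset.range r, (a + i)) * Gamma a := by
  induction r with
  | zero => simp
  | succ n ih =>
    rw [Nat.cast_succ, ← add_assoc, Gamma_add_one (ha n), ih, Finset.prod_range_succ]
    ring

lemma log_pow_mul_gll (θ lam p : ℝ) (r : ℕ) {x : ℝ} (hx : x ∈ Ioo 0 1) :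
    log x ^ r * gll θ lam p x =
      (-1) ^ r * (θ ^ (2 + p) / (Gamma (1 + p) * (1 + p + lam * θ))) *
        (lam * ((-log x) ^ (p + r) * x ^ (θ - 1)) + (-log x) ^ (p + r + 1) * x ^ (θ - 1)) := by
  have hlog : 0 < -log x := neg_pos.mpr (log_neg hx.1 hx.2)
  rw [rpow_add_one hlog.ne', rpow_add_natCast hlog.ne',
    show log x ^ r = (-1) ^ r * (-log x) ^ r by rw [← mul_pow]; simp, gll]
  ring

theorem gll_log_power_moment_general (θ lam p : ℝ) (hθ : 0 < θ) (hp : 0 ≤ p) (r : ℕ) :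
    ∫ x in Set.Ioo (0:ℝ) 1, (Real.log x) ^ r * gll θ lam p x =
      (-1) ^ r * (∏ i ∈ Finset.range r, (p + 1 + (i : ℝ))) * (1 + (r : ℝ) + p + lam * θ) /
        (θ ^ r * (1 + p + lam * θ)) := by
  have hb : -1 < p + r := by linarith [(Nat.cast_nonneg r : (0:ℝ) ≤ r)]
  rw [setIntegral_congr_fun measurableSet_Ioo fun x hx => log_pow_mul_gll θ lam p r hx,
    integral_const_mul, integral_add ((integrableOn_neg_log_rpow_mul_rpow hb hθ).const_mul lam)
      (integrableOn_neg_log_rpow_mul_rpow (by linarith) hθ), integral_const_mul,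
    integral_neg_log_rpow_mul_rpow hb hθ, integral_neg_log_rpow_mul_rpow (by linarith) hθ]
  have hΓ : Gamma (p + r + 1) = (∏ i ∈ Finset.range r, (p + 1 + (i : ℝ))) * Gamma (1 + p) := by
    rw [add_right_comm, Gamma_add_nat_eq_prod_mul_Gamma (fun k => by positivity), add_comm 1 p]
  have hΓpos : 0 < Gamma (1 + p) := Gamma_pos_of_pos (by positivity)
  rw [Gamma_add_one (s := p + r + 1) (by positivity), hΓ, add_comm 2 p, rpow_add hθ, rpow_two]
  simp only [rpow_add_one hθ.ne', rpow_add_natCast hθ.ne']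
  have hθp : 0 < θ ^ p := rpow_pos_of_pos hθ p
  field_simp
  ring

theorem gll_log_power_moment (θ lam p : ℝ) (hθ : 0 < θ) (hlam : 0 ≤ lam) (hp : 0 ≤ p)
    (r : ℕ) (hr : 1 ≤ r) :
    ∫ x in Set.Ioo (0:ℝ) 1, (Real.log x) ^ r * gll θ lam p x =
      (-1) ^ r * (∏ i ∈ Finset.range r, (p + 1 + (i : ℝ))) * (1 + (r : ℝ) + p + lam * θ) /
        (θ ^ r * (1 + p + lam * θ)) :=
  gll_log_power_moment_general θ lam p hθ hp r
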